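/- Let F : X → Y be a shape morphism of topological spaces which has a left inverse, i.e., there is a shape morphism G : Y → X with G ∘ F = 1_X. If sd F ≤ n, then sd X ≤ n. -/

import Mathlib

universe u

noncomputable section

namespace ShapePaper

open CategoryTheory

/-! ### H-maps: morphisms of the homotopy category HTop -/

/-- The setoid of continuous maps up to homotopy. -/
def homotopySetoid (X Y : Type u) [TopologicalSpace X] [TopologicalSpace Y] :
    Setoid C(X, Y) :=
  ⟨ContinuousMap.Homotopic, ContinuousMap.Homotopic.equivalence⟩

/-- An H-map `X → Y` is a homotopy class of continuous maps `X → Y`,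
i.e. a morphism of the homotopy category `HTop`. -/
def HMap (X Y : Type u) [TopologicalSpace X] [TopologicalSpace Y] : Type u :=
  Quotient (homotopySetoid X Y)

variable {X Y Z W : Type u} [TopologicalSpace X] [TopologicalSpace Y]
  [TopologicalSpace Z] [TopologicalSpace W]

/-- The H-map (homotopy class) of a continuous map. -/
def HMap.mk (f : C(X, Y)) : HMap X Y := Quotient.mk (homotopySetoid X Y) f

/-- The identity H-map. -/
protected def HMap.id (X : Type u) [TopologicalSpace X] : HMap X X :=
  HMap.mk (ContinuousMap.id X)

/-- Composition of H-maps. -/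
protected def HMap.comp (g : HMap Y Z) (f : HMap X Y) : HMap X Z :=
  Quotient.liftOn₂ g f (fun g f => HMap.mk (g.comp f))
    (fun _ _ _ _ hg hf => Quotient.sound (ContinuousMap.Homotopic.comp hg hf))

theorem HMap.comp_assoc (h : HMap Z W) (g : HMap Y Z) (f : HMap X Y) :
    HMap.comp (HMap.comp h g) f = HMap.comp h (HMap.comp g f) := by
  induction h using Quotient.inductionOn
  induction g using Quotient.inductionOn
  induction f using Quotient.inductionOn
  rfl

theorem HMap.id_comp (f : HMap X Y) : HMap.comp (HMap.id Y) f = f := by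
  induction f using Quotient.inductionOn
  rfl

theorem HMap.comp_id (f : HMap X Y) : HMap.comp f (HMap.id X) = f := by
  induction f using Quotient.inductionOn
  rfl

/-! ### Polyhedra and the category HPol -/

/-- A realization of the space `P` as (the space of) a simplicial complex. -/
structure PolyhedralRealization (P : Type u) [TopologicalSpace P] where
  /-- the ambient topological real vector space -/
  E : Type u
  [addCommGroup : AddCommGroup E]
  [module : Module ℝ E]
  [topE : TopologicalSpace E]
  /-- the simplicial complex -/
  complex : Geometry.SimplicialComplex ℝ E
  /-- `P` is homeomorphic to the space (carrier) of the complex -/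
  homeo : P ≃ₜ complex.space

attribute [instance] PolyhedralRealization.addCommGroup PolyhedralRealization.module
  PolyhedralRealization.topE

/-- The realization has dimension `≤ n`: every simplex has at most `n + 1` vertices. -/
def PolyhedralRealization.DimLE {P : Type u} [TopologicalSpace P]
    (R : PolyhedralRealization P) (n : ℕ) : Prop :=
  ∀ s ∈ R.complex.faces, s.card ≤ n + 1

/-- `P` is a polyhedron. -/
def IsPolyhedron (P : Type u) [TopologicalSpace P] : Prop :=
  Nonempty (PolyhedralRealization P)

/-- `P` is a polyhedron of dimension `≤ n`. -/
def IsPolyhedronDimLE (P : Type u) [TopologicalSpace P] (n : ℕ) : Prop :=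
  ∃ R : PolyhedralRealization P, R.DimLE n

/-- `X` is an object of `HPol`, i.e. has the homotopy type of a polyhedron. -/
def InHPol (X : Type u) [TopologicalSpace X] : Prop :=
  ∃ (P : Type u) (_ : TopologicalSpace P), IsPolyhedron P ∧
    Nonempty (ContinuousMap.HomotopyEquiv X P)

/-- The H-map `f` factors in `HPol` through some polyhedron of dimension `≤ n`. -/
def HMap.FactorsThruPolyhedronDimLE (f : HMap X Y) (n : ℕ) : Prop :=
  ∃ (P : Type u) (_ : TopologicalSpace P), IsPolyhedronDimLE P n ∧
    ∃ (u : HMap X P) (v : HMap P Y), f = v.comp u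

/-- `X` is homotopy dominated by a polyhedron of dimension `≤ n`. -/
def DominatedByPolyhedronDimLE (X : Type u) [TopologicalSpace X] (n : ℕ) : Prop :=
  ∃ (P : Type u) (_ : TopologicalSpace P), IsPolyhedronDimLE P n ∧
    ∃ (s : HMap X P) (d : HMap P X), d.comp s = HMap.id X

/-! ### Inverse systems in HPol -/

/-- An inverse system in the category `HPol`: a directed index set `Idx`, spaces `obj i`
having the homotopy type of polyhedra, and bonding H-maps. -/
structure InverseSystem : Type (u + 1) where
  /-- the index set -/
  Idx : Type u
  [preorder : Preorder Idx]
  [idxNonempty : Nonempty Idx]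
  directed : ∀ a b : Idx, ∃ c, a ≤ c ∧ b ≤ c
  /-- the terms of the system -/
  obj : Idx → Type u
  [topObj : ∀ i, TopologicalSpace (obj i)]
  inHPol : ∀ i, InHPol (obj i)
  /-- the bonding H-maps -/
  bond : ∀ {i j : Idx}, i ≤ j → HMap (obj j) (obj i)
  bond_refl : ∀ i : Idx, bond (le_refl i) = HMap.id (obj i)
  bond_trans : ∀ {i j k : Idx} (hij : i ≤ j) (hjk : j ≤ k),
    HMap.comp (bond hij) (bond hjk) = bond (hij.trans hjk)

attribute [instance] InverseSystem.preorder InverseSystem.idxNonempty InverseSystem.topObj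

/-- A morphism of inverse systems in `HPol`. -/
structure SysMor (𝓧 𝓨 : InverseSystem.{u}) : Type u where
  /-- the index function `φ` -/
  idxMap : 𝓨.Idx → 𝓧.Idx
  /-- the H-maps `f_μ : X_{φ(μ)} → Y_μ` -/
  hmap : ∀ μ : 𝓨.Idx, HMap (𝓧.obj (idxMap μ)) (𝓨.obj μ)
  coherent : ∀ {μ μ' : 𝓨.Idx} (h : μ ≤ μ'),
    ∃ (l : 𝓧.Idx) (h₁ : idxMap μ ≤ l) (h₂ : idxMap μ' ≤ l),
      (𝓨.bond h).comp ((hmap μ').comp (𝓧.bond h₂)) = (hmap μ).comp (𝓧.bond h₁)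

variable {𝓧 𝓨 𝓩 : InverseSystem.{u}}

/-- `f_{μλ} := f_μ ∘ p_{φ(μ)λ}` for `λ ≥ φ(μ)`. -/
def SysMor.shift (F : SysMor 𝓧 𝓨) (μ : 𝓨.Idx) {l : 𝓧.Idx} (h : F.idxMap μ ≤ l) :
    HMap (𝓧.obj l) (𝓨.obj μ) :=
  (F.hmap μ).comp (𝓧.bond h)

theorem SysMor.shift_comp (F : SysMor 𝓧 𝓨) (μ : 𝓨.Idx) {l l' : 𝓧.Idx}
    (h : F.idxMap μ ≤ l) (h' : l ≤ l') :
    (F.shift μ h).comp (𝓧.bond h') = F.shift μ (h.trans h') := by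
  rw [SysMor.shift, SysMor.shift, HMap.comp_assoc, 𝓧.bond_trans]

/-- Coherence, pushed up to all larger indices. -/
theorem SysMor.coherent' (F : SysMor 𝓧 𝓨) {μ μ' : 𝓨.Idx} (h : μ ≤ μ') :
    ∃ (l : 𝓧.Idx) (h₁ : F.idxMap μ ≤ l) (h₂ : F.idxMap μ' ≤ l),
      ∀ {l' : 𝓧.Idx} (hl : l ≤ l'),
        (𝓨.bond h).comp ((F.hmap μ').comp (𝓧.bond (h₂.trans hl))) =
          (F.hmap μ).comp (𝓧.bond (h₁.trans hl)) := by
  obtain ⟨l, h₁, h₂, heq⟩ := F.coherent h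
  refine ⟨l, h₁, h₂, ?_⟩
  intro l' hl
  have := congrArg (fun t => HMap.comp t (𝓧.bond hl)) heq
  simpa only [HMap.comp_assoc, InverseSystem.bond_trans] using this

/-- The dimension of a morphism of inverse systems is `≤ n`. -/
def SysMor.DimLE (F : SysMor 𝓧 𝓨) (n : ℕ) : Prop :=
  ∀ μ : 𝓨.Idx, ∃ (l : 𝓧.Idx) (h : F.idxMap μ ≤ l),
    (F.shift μ h).FactorsThruPolyhedronDimLE n

/-- The dimension of an inverse system is `≤ n` : every term is homotopy dominated by
a polyhedron of dimension `≤ n`. -/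
def InverseSystem.DimLE (𝓧 : InverseSystem.{u}) (n : ℕ) : Prop :=
  ∀ i : 𝓧.Idx, DominatedByPolyhedronDimLE (𝓧.obj i) n

/-- Equivalence of morphisms of inverse systems. -/
def SysMor.Equiv (F G : SysMor 𝓧 𝓨) : Prop :=
  ∀ μ : 𝓨.Idx, ∃ (l : 𝓧.Idx) (h₁ : F.idxMap μ ≤ l) (h₂ : G.idxMap μ ≤ l),
    F.shift μ h₁ = G.shift μ h₂

/-- A pro-morphism (morphism of pro-HPol) is an equivalence class of morphisms
of inverse systems. -/
def ProMor (𝓧 𝓨 : InverseSystem.{u}) : Type u :=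
  Quot (@SysMor.Equiv 𝓧 𝓨)

/-- The pro-morphism represented by a morphism of inverse systems. -/
def ProMor.mk (F : SysMor 𝓧 𝓨) : ProMor 𝓧 𝓨 := Quot.mk _ F

/-- The dimension of a pro-morphism is `≤ n` if it admits a representative of
dimension `≤ n`. -/
def ProMor.DimLE (f : ProMor 𝓧 𝓨) (n : ℕ) : Prop :=
  ∃ F : SysMor 𝓧 𝓨, ProMor.mk F = f ∧ F.DimLE n

/-- The identity morphism of an inverse system. -/
def SysMor.identity (𝓧 : InverseSystem.{u}) : SysMor 𝓧 𝓧 where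
  idxMap := id
  hmap i := HMap.id (𝓧.obj i)
  coherent := by
    intro μ μ' h
    refine ⟨μ', h, le_refl _, ?_⟩
    show (𝓧.bond h).comp ((HMap.id _).comp (𝓧.bond (le_refl μ'))) =
      (HMap.id _).comp (𝓧.bond h)
    rw [HMap.id_comp, HMap.id_comp, 𝓧.bond_trans]

/-- Composition of morphisms of inverse systems. -/
def SysMor.comp (G : SysMor 𝓨 𝓩) (F : SysMor 𝓧 𝓨) : SysMor 𝓧 𝓩 where
  idxMap := F.idxMap ∘ G.idxMap
  hmap ν := (G.hmap ν).comp (F.hmap (G.idxMap ν))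
  coherent := by
    intro ν ν' h
    obtain ⟨μ, hμ₁, hμ₂, hg⟩ := G.coherent h
    obtain ⟨l₁, h₁₁, h₁₂, hf₁⟩ := F.coherent' hμ₁
    obtain ⟨l₂, h₂₁, h₂₂, hf₂⟩ := F.coherent' hμ₂
    obtain ⟨l, hl₁, hl₂⟩ := 𝓧.directed l₁ l₂
    refine ⟨l, h₁₁.trans hl₁, h₂₁.trans hl₂, ?_⟩
    have e₁ := hf₁ hl₁
    have e₂ := hf₂ hl₂
    have hg₂ := congrArg
      (fun t => HMap.comp t ((F.hmap μ).comp (𝓧.bond (h₂₂.trans hl₂)))) hg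
    simp only [HMap.comp_assoc] at hg₂ e₁ e₂ ⊢
    rw [← e₂, hg₂, ← e₁]

/-- Composition of pro-morphisms (via choice of representatives). -/
def ProMor.comp (g : ProMor 𝓨 𝓩) (f : ProMor 𝓧 𝓨) : ProMor 𝓧 𝓩 :=
  ProMor.mk ((Quot.out g).comp (Quot.out f))

/-- The identity pro-morphism. -/
protected def ProMor.id (𝓧 : InverseSystem.{u}) : ProMor 𝓧 𝓧 :=
  ProMor.mk (SysMor.identity 𝓧)

/-- `α` is an isomorphism of pro-HPol. -/
def ProMor.IsIso (α : ProMor 𝓧 𝓨) : Prop :=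
  ∃ β : ProMor 𝓨 𝓧, β.comp α = ProMor.id 𝓧 ∧ α.comp β = ProMor.id 𝓨

/-! ### Restriction to a cofinal subset -/

/-- The subsystem of `𝓨` determined by a cofinal subset `S` of the index set. -/
def InverseSystem.restrict (𝓨 : InverseSystem.{u}) (S : Set 𝓨.Idx)
    (hcof : ∀ μ : 𝓨.Idx, ∃ μ' ∈ S, μ ≤ μ') : InverseSystem.{u} where
  Idx := ↥S
  idxNonempty := by
    obtain ⟨μ⟩ := 𝓨.idxNonempty
    obtain ⟨μ', hs, -⟩ := hcof μ
    exact ⟨⟨μ', hs⟩⟩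
  directed a b := by
    obtain ⟨c, hac, hbc⟩ := 𝓨.directed a b
    obtain ⟨c', hs, hcc'⟩ := hcof c
    exact ⟨⟨c', hs⟩, Subtype.coe_le_coe.mp (le_trans hac hcc'),
      Subtype.coe_le_coe.mp (le_trans hbc hcc')⟩
  obj i := 𝓨.obj i
  topObj i := 𝓨.topObj i
  inHPol i := 𝓨.inHPol i
  bond h := 𝓨.bond h
  bond_refl i := 𝓨.bond_refl i
  bond_trans h₁ h₂ := 𝓨.bond_trans h₁ h₂

/-- The morphism induced by `F : 𝓧 → 𝓨` and the inclusion of a cofinal subset of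
the index set of `𝓨`. -/
def SysMor.restrict (F : SysMor 𝓧 𝓨) (S : Set 𝓨.Idx)
    (hcof : ∀ μ : 𝓨.Idx, ∃ μ' ∈ S, μ ≤ μ') : SysMor 𝓧 (𝓨.restrict S hcof) where
  idxMap μ := F.idxMap μ.val
  hmap μ := F.hmap μ.val
  coherent := by
    intro μ μ' h
    exact F.coherent h

/-! ### Expansions and shape dimension -/

/-- An `HPol`-expansion of the topological space `X`. -/
structure Expansion (X : Type u) [TopologicalSpace X] (𝓧 : InverseSystem.{u}) where
  /-- the projection H-maps `p_λ : X → X_λ` -/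
  proj : ∀ l : 𝓧.Idx, HMap X (𝓧.obj l)
  proj_bond : ∀ {l l' : 𝓧.Idx} (h : l ≤ l'), (𝓧.bond h).comp (proj l') = proj l
  /-- every H-map into a space of `HPol` factors through some term of the system -/
  factors : ∀ (P : Type u) [TopologicalSpace P], InHPol P → ∀ f : HMap X P,
    ∃ (l : 𝓧.Idx) (g : HMap (𝓧.obj l) P), g.comp (proj l) = f
  /-- the factorization is unique after passing to a larger index -/
  factors_unique : ∀ (P : Type u) [TopologicalSpace P], InHPol P →
    ∀ (l : 𝓧.Idx) (g g' : HMap (𝓧.obj l) P), g.comp (proj l) = g'.comp (proj l) →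
      ∃ (l' : 𝓧.Idx) (h : l ≤ l'), g.comp (𝓧.bond h) = g'.comp (𝓧.bond h)

/-- The shape dimension of a topological space is `≤ n`: `X` admits an
`HPol`-expansion all of whose terms are homotopy dominated by polyhedra of
dimension `≤ n`. -/
def ShapeDimLE (X : Type u) [TopologicalSpace X] (n : ℕ) : Prop :=
  ∃ (𝓧 : InverseSystem.{u}) (_ : Expansion X 𝓧), 𝓧.DimLE n

/-- The morphism of inverse systems `F` represents the H-map `f` with respect to the
expansions `pX` and `pY`, i.e. `q_μ ∘ f = f_μ ∘ p_{φ(μ)}` for all `μ`. -/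
def Represents {X Y : Type u} [TopologicalSpace X] [TopologicalSpace Y]
    {𝓧 𝓨 : InverseSystem.{u}} (pX : Expansion X 𝓧) (pY : Expansion Y 𝓨)
    (f : HMap X Y) (F : SysMor 𝓧 𝓨) : Prop :=
  ∀ μ : 𝓨.Idx, (F.hmap μ).comp (pX.proj (F.idxMap μ)) = (pY.proj μ).comp f

/-- The shape dimension of an H-map `f : X → Y` is `≤ n`: the shape morphism
induced by `f` admits a representation by a pro-morphism of dimension `≤ n`. -/
def HMapShapeDimLE {X Y : Type u} [TopologicalSpace X] [TopologicalSpace Y]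
    (f : HMap X Y) (n : ℕ) : Prop :=
  ∃ (𝓧 𝓨 : InverseSystem.{u}) (pX : Expansion X 𝓧) (pY : Expansion Y 𝓨)
    (F : SysMor 𝓧 𝓨), Represents pX pY f F ∧ (ProMor.mk F).DimLE n

/-- The shape dimension of a space, as an extended natural number. -/
def shapeDim (X : Type u) [TopologicalSpace X] : ℕ∞ :=
  sInf {n : ℕ∞ | ∃ m : ℕ, n = (m : ℕ∞) ∧ ShapeDimLE X m}

/-- The shape dimension of an H-map, as an extended natural number. -/
def hmapShapeDim {X Y : Type u} [TopologicalSpace X] [TopologicalSpace Y]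
    (f : HMap X Y) : ℕ∞ :=
  sInf {n : ℕ∞ | ∃ m : ℕ, n = (m : ℕ∞) ∧ HMapShapeDimLE f m}

end ShapePaper

namespace ShapePaper

/-! Composing `G` with a representative of `F` of dimension `≤ n` shows that every bonding
map `p_{λλ'}` of `𝓧`, for `λ'` large enough, factors as `v_λ ∘ u_λ` through a polyhedron
`P_λ` of dimension `≤ n`. The polyhedra `P_λ`, with bonds `u_λ ∘ p ∘ v_{λ'}`, then form a new
`HPol`-expansion of `X`. -/

section

variable {𝓧 𝓨 𝓩 : InverseSystem.{u}} {n : ℕ}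

section Factorization

variable {X Y Z : Type u} [TopologicalSpace X] [TopologicalSpace Y] [TopologicalSpace Z]

theorem HMap.FactorsThruPolyhedronDimLE.comp_left {f : HMap X Y}
    (hf : f.FactorsThruPolyhedronDimLE n) (g : HMap Y Z) :
    (g.comp f).FactorsThruPolyhedronDimLE n := by
  obtain ⟨P, _, hP, u, v, rfl⟩ := hf
  exact ⟨P, _, hP, u, g.comp v, (HMap.comp_assoc _ _ _).symm⟩

theorem HMap.FactorsThruPolyhedronDimLE.comp_right {g : HMap Y Z}
    (hg : g.FactorsThruPolyhedronDimLE n) (f : HMap X Y) :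
    (g.comp f).FactorsThruPolyhedronDimLE n := by
  obtain ⟨P, _, hP, u, v, rfl⟩ := hg
  exact ⟨P, _, hP, u.comp f, v, HMap.comp_assoc _ _ _⟩

end Factorization

theorem SysMor.shift_eq_shift_of_le {F G : SysMor 𝓧 𝓨} {μ : 𝓨.Idx} {l l' : 𝓧.Idx}
    {h₁ : F.idxMap μ ≤ l} {h₂ : G.idxMap μ ≤ l} (e : F.shift μ h₁ = G.shift μ h₂)
    (hl : l ≤ l') : F.shift μ (h₁.trans hl) = G.shift μ (h₂.trans hl) := by
  rw [← F.shift_comp μ h₁ hl, ← G.shift_comp μ h₂ hl, e]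

theorem SysMor.Equiv.trans {F G H : SysMor 𝓧 𝓨} (hFG : F.Equiv G) (hGH : G.Equiv H) :
    F.Equiv H := by
  intro μ
  obtain ⟨l₁, hF, hG, e₁⟩ := hFG μ
  obtain ⟨l₂, _, hH, e₂⟩ := hGH μ
  obtain ⟨l, hl₁, hl₂⟩ := 𝓧.directed l₁ l₂
  exact ⟨l, hF.trans hl₁, hH.trans hl₂,
    (SysMor.shift_eq_shift_of_le e₁ hl₁).trans (SysMor.shift_eq_shift_of_le e₂ hl₂)⟩

theorem SysMor.equivalence_equiv : Equivalence (@SysMor.Equiv 𝓧 𝓨) where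
  refl F μ := ⟨F.idxMap μ, le_rfl, le_rfl, rfl⟩
  symm h μ := by
    obtain ⟨l, h₁, h₂, e⟩ := h μ
    exact ⟨l, h₂, h₁, e.symm⟩
  trans := SysMor.Equiv.trans

theorem SysMor.equiv_of_mk_eq {F G : SysMor 𝓧 𝓨} (h : ProMor.mk F = ProMor.mk G) :
    F.Equiv G :=
  (Equivalence.eqvGen_iff SysMor.equivalence_equiv).mp (Quot.eq.mp h)

theorem SysMor.shift_factors_of_le {F : SysMor 𝓧 𝓨} {μ : 𝓨.Idx} {l l' : 𝓧.Idx}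
    {h : F.idxMap μ ≤ l} (hF : (F.shift μ h).FactorsThruPolyhedronDimLE n) (hl : l ≤ l') :
    (F.shift μ (h.trans hl)).FactorsThruPolyhedronDimLE n :=
  F.shift_comp μ h hl ▸ hF.comp_right _

theorem SysMor.DimLE.of_equiv {F G : SysMor 𝓧 𝓨} (hF : F.DimLE n) (hFG : F.Equiv G) :
    G.DimLE n := by
  intro μ
  obtain ⟨l₁, _, hfac⟩ := hF μ
  obtain ⟨l₂, _, hG₂, e⟩ := hFG μ
  obtain ⟨l, hl₁, hl₂⟩ := 𝓧.directed l₁ l₂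
  refine ⟨l, hG₂.trans hl₂, ?_⟩
  rw [← SysMor.shift_eq_shift_of_le e hl₂]
  exact SysMor.shift_factors_of_le hfac hl₁

theorem ProMor.DimLE.sysMor_dimLE {f : ProMor 𝓧 𝓨} (hf : f.DimLE n) {F : SysMor 𝓧 𝓨}
    (hF : ProMor.mk F = f) : F.DimLE n := by
  obtain ⟨F', hF', hdim⟩ := hf
  exact hdim.of_equiv (SysMor.equiv_of_mk_eq (hF'.trans hF.symm))

theorem SysMor.identity_shift {l l' : 𝓧.Idx} (h : l ≤ l') :
    (SysMor.identity 𝓧).shift l h = 𝓧.bond h :=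
  HMap.id_comp _

theorem SysMor.comp_shift (G : SysMor 𝓨 𝓩) (F : SysMor 𝓧 𝓨) (ν : 𝓩.Idx) {l : 𝓧.Idx}
    (h : (G.comp F).idxMap ν ≤ l) :
    (G.comp F).shift ν h = (G.hmap ν).comp (F.shift (G.idxMap ν) h) :=
  HMap.comp_assoc _ _ _

theorem exists_bond_factors_of_comp_equiv_identity {F : SysMor 𝓧 𝓨} {G : SysMor 𝓨 𝓧}
    (hGF : (G.comp F).Equiv (SysMor.identity 𝓧)) (hF : F.DimLE n) (l : 𝓧.Idx) :
    ∃ (l' : 𝓧.Idx) (h : l ≤ l'), (𝓧.bond h).FactorsThruPolyhedronDimLE n := by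
  obtain ⟨l₁, hGF₁, hid₁ : l ≤ l₁, e⟩ := hGF l
  obtain ⟨l₂, _, hfac⟩ := hF (G.idxMap l)
  obtain ⟨l', hl₁, hl₂⟩ := 𝓧.directed l₁ l₂
  refine ⟨l', hid₁.trans hl₁, ?_⟩
  have hbond : 𝓧.bond (hid₁.trans hl₁) =
      (G.hmap l).comp (F.shift (G.idxMap l) (hGF₁.trans hl₁)) :=
    calc 𝓧.bond (hid₁.trans hl₁)
        = (SysMor.identity 𝓧).shift l (hid₁.trans hl₁) := (SysMor.identity_shift _).symm
      _ = (G.comp F).shift l (hGF₁.trans hl₁) := (SysMor.shift_eq_shift_of_le e hl₁).symm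
      _ = _ := SysMor.comp_shift G F l _
  rw [hbond]
  exact (SysMor.shift_factors_of_le hfac hl₂).comp_left _

structure BondFactorization (𝓧 : InverseSystem.{u}) (n : ℕ) : Type (u + 1) where
  next : 𝓧.Idx → 𝓧.Idx
  le_next : ∀ l, l ≤ next l
  poly : 𝓧.Idx → Type u
  [topPoly : ∀ l, TopologicalSpace (poly l)]
  isPolyhedronDimLE : ∀ l, IsPolyhedronDimLE (poly l) n
  down : ∀ l, HMap (𝓧.obj (next l)) (poly l)
  up : ∀ l, HMap (poly l) (𝓧.obj l)
  up_comp_down : ∀ l, (up l).comp (down l) = 𝓧.bond (le_next l)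

attribute [instance] BondFactorization.topPoly

theorem BondFactorization.nonempty_of_forall
    (H : ∀ l : 𝓧.Idx, ∃ (l' : 𝓧.Idx) (h : l ≤ l'), (𝓧.bond h).FactorsThruPolyhedronDimLE n) :
    Nonempty (BondFactorization 𝓧 n) := by
  choose next le_next poly topPoly hpoly down up hfac using H
  exact ⟨{
    next := next
    le_next := le_next
    poly := poly
    topPoly := topPoly
    isPolyhedronDimLE := hpoly
    down := down
    up := up
    up_comp_down := fun l => (hfac l).symm }⟩

namespace BondFactorization

variable (D : BondFactorization 𝓧 n)

def Index (_ : BondFactorization 𝓧 n) : Type u := 𝓧.Idx × ULift.{u} ℕ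

/-- The generation counter `x.2` rules out `x < y < x`, around which the bonds `D.bond`
would not compose to the identity. -/
def Le (x y : D.Index) : Prop :=
  x = y ∨ (D.next x.1 ≤ y.1 ∧ x.2.down < y.2.down)

theorem Le.trans {x y z : D.Index} (hxy : D.Le x y) (hyz : D.Le y z) : D.Le x z := by
  rcases hxy with rfl | ⟨hxy, hxy'⟩
  · exact hyz
  rcases hyz with rfl | ⟨hyz, hyz'⟩
  · exact Or.inr ⟨hxy, hxy'⟩
  exact Or.inr ⟨hxy.trans ((D.le_next y.1).trans hyz), hxy'.trans hyz'⟩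

instance : Preorder D.Index where
  le := D.Le
  le_refl _ := Or.inl rfl
  le_trans _ _ _ := Le.trans D

open Classical in
def bond {x y : D.Index} (h : x ≤ y) : HMap (D.poly y.1) (D.poly x.1) :=
  if hxy : x = y then hxy ▸ HMap.id _
  else ((D.down x.1).comp (𝓧.bond (h.resolve_left hxy).1)).comp (D.up y.1)

theorem bond_refl (x : D.Index) : D.bond (le_refl x) = HMap.id _ := by
  rw [bond, dif_pos rfl]

theorem bond_of_ne {x y : D.Index} (h : x ≤ y) (hxy : x ≠ y) :
    D.bond h = ((D.down x.1).comp (𝓧.bond (h.resolve_left hxy).1)).comp (D.up y.1) := by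
  rw [bond, dif_neg hxy]

theorem bond_trans {x y z : D.Index} (hxy : x ≤ y) (hyz : y ≤ z) :
    (D.bond hxy).comp (D.bond hyz) = D.bond (hxy.trans hyz) := by
  rcases eq_or_ne x y with rfl | hxy'
  · rw [bond_refl, HMap.id_comp]
  rcases eq_or_ne y z with rfl | hyz'
  · rw [bond_refl, HMap.comp_id]
  have hxz' : x ≠ z := by
    rintro rfl
    exact (hxy.resolve_left hxy').2.asymm (hyz.resolve_left hyz').2
  rw [bond_of_ne _ hxy hxy', bond_of_ne _ hyz hyz', bond_of_ne _ _ hxz']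
  simp only [HMap.comp_assoc]
  rw [← HMap.comp_assoc (D.up y.1), D.up_comp_down, ← HMap.comp_assoc (𝓧.bond _) (𝓧.bond _),
    𝓧.bond_trans, ← HMap.comp_assoc (𝓧.bond _) (𝓧.bond _), 𝓧.bond_trans]

def system : InverseSystem.{u} where
  Idx := D.Index
  idxNonempty := ⟨(Classical.arbitrary _, ⟨0⟩)⟩
  directed x y := by
    obtain ⟨l, hxl, hyl⟩ := 𝓧.directed (D.next x.1) (D.next y.1)
    exact ⟨(l, ⟨max x.2.down y.2.down + 1⟩), Or.inr ⟨hxl, Nat.lt_succ_of_le (le_max_left _ _)⟩,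
      Or.inr ⟨hyl, Nat.lt_succ_of_le (le_max_right _ _)⟩⟩
  obj x := D.poly x.1
  inHPol x := by
    obtain ⟨R, -⟩ := D.isPolyhedronDimLE x.1
    exact ⟨D.poly x.1, _, ⟨R⟩, ⟨ContinuousMap.HomotopyEquiv.refl _⟩⟩
  bond := D.bond
  bond_refl := D.bond_refl
  bond_trans := D.bond_trans

theorem system_dimLE : D.system.DimLE n := fun x =>
  ⟨D.poly x.1, _, D.isPolyhedronDimLE x.1, HMap.id _, HMap.id _, HMap.id_comp _⟩

variable {X : Type u} [TopologicalSpace X] (pX : Expansion X 𝓧)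

def proj (x : D.Index) : HMap X (D.poly x.1) :=
  (D.down x.1).comp (pX.proj (D.next x.1))

theorem up_comp_proj (x : D.Index) : (D.up x.1).comp (D.proj pX x) = pX.proj x.1 := by
  rw [proj, ← HMap.comp_assoc, D.up_comp_down, pX.proj_bond]

theorem bond_comp_proj {x y : D.Index} (h : x ≤ y) :
    (D.bond h).comp (D.proj pX y) = D.proj pX x := by
  rcases eq_or_ne x y with rfl | hxy
  · rw [D.bond_refl, HMap.id_comp]
  rw [D.bond_of_ne h hxy]
  simp only [HMap.comp_assoc]
  rw [D.up_comp_proj pX, pX.proj_bond]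
  rfl

variable {Q : Type u} [TopologicalSpace Q]

theorem exists_comp_proj_eq (hQ : InHPol Q) (f : HMap X Q) :
    ∃ (x : D.Index) (g : HMap (D.poly x.1) Q), g.comp (D.proj pX x) = f := by
  obtain ⟨l, g, rfl⟩ := pX.factors Q hQ f
  exact ⟨(l, ⟨0⟩), g.comp (D.up l),
    (HMap.comp_assoc _ _ _).trans (congrArg g.comp (D.up_comp_proj pX _))⟩

theorem exists_comp_bond_eq_of_comp_proj_eq (hQ : InHPol Q) (x : D.Index)
    (g g' : HMap (D.poly x.1) Q) (hgg' : g.comp (D.proj pX x) = g'.comp (D.proj pX x)) :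
    ∃ (y : D.Index) (hxy : x ≤ y), g.comp (D.bond hxy) = g'.comp (D.bond hxy) := by
  obtain ⟨l', hl', e⟩ := pX.factors_unique Q hQ (D.next x.1) (g.comp (D.down x.1))
    (g'.comp (D.down x.1)) (by simpa only [proj, HMap.comp_assoc] using hgg')
  have hxy : x ≤ ((l', ⟨x.2.down + 1⟩) : D.Index) := Or.inr ⟨hl', Nat.lt_succ_self _⟩
  have hxy' : x ≠ ((l', ⟨x.2.down + 1⟩) : D.Index) := fun h => by
    simpa using congrArg (fun z : D.Index => z.2.down) h
  refine ⟨_, hxy, ?_⟩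
  rw [D.bond_of_ne hxy hxy']
  simp only [← HMap.comp_assoc]
  rw [e]

def expansion : Expansion X D.system where
  proj := D.proj pX
  proj_bond := D.bond_comp_proj pX
  factors _ _ hQ := D.exists_comp_proj_eq pX hQ
  factors_unique _ _ hQ := D.exists_comp_bond_eq_of_comp_proj_eq pX hQ

end BondFactorization

theorem shapeDimLE_of_forall_bond_factors {X : Type u} [TopologicalSpace X] (pX : Expansion X 𝓧)
    (H : ∀ l : 𝓧.Idx, ∃ (l' : 𝓧.Idx) (h : l ≤ l'), (𝓧.bond h).FactorsThruPolyhedronDimLE n) :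
    ShapeDimLE X n :=
  let ⟨D⟩ := BondFactorization.nonempty_of_forall H
  ⟨D.system, D.expansion pX, D.system_dimLE⟩

end

theorem shapeDimLE_of_left_inverse_general (X : Type u)
    [TopologicalSpace X]
    (𝓧 𝓨 : InverseSystem.{u}) (pX : Expansion X 𝓧)
    (F : SysMor 𝓧 𝓨) (G : SysMor 𝓨 𝓧)
    (hinv : (ProMor.mk G).comp (ProMor.mk F) = ProMor.id 𝓧)
    (n : ℕ) (hF : (ProMor.mk F).DimLE n) : ShapeDimLE X n := by
  -- `ProMor.comp` composes the representatives `Quot.out`, so `hF` is needed for `Quot.out`.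
  have hGF := SysMor.equiv_of_mk_eq hinv
  have hF₀ := hF.sysMor_dimLE (Quot.out_eq (ProMor.mk F))
  exact shapeDimLE_of_forall_bond_factors pX (exists_bond_factors_of_comp_equiv_identity hGF hF₀)

/-- **Theorem 2.18.** Let `F : X → Y` be a shape morphism of topological spaces (given,
with respect to HPol-expansions of `X` and `Y`, by a morphism of inverse systems `F`)
which has a left inverse `G : Y → X`, i.e. `G ∘ F = 1_X`.  If `sd F ≤ n` then
`sd X ≤ n`. -/
theorem shapeDimLE_of_left_inverse (X Y : Type u)
    [TopologicalSpace X] [TopologicalSpace Y]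
    (𝓧 𝓨 : InverseSystem.{u}) (pX : Expansion X 𝓧) (pY : Expansion Y 𝓨)
    (F : SysMor 𝓧 𝓨) (G : SysMor 𝓨 𝓧)
    (hinv : (ProMor.mk G).comp (ProMor.mk F) = ProMor.id 𝓧)
    (n : ℕ) (hF : (ProMor.mk F).DimLE n) : ShapeDimLE X n :=
  shapeDimLE_of_left_inverse_general X 𝓧 𝓨 pX F G hinv n hF

end ShapePaper
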